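/- arXiv:2312.07363 — 5 statements merged into one kernel-verified Lean document; each statement's English description precedes it below -/
import Mathlib

section
/- There exists ν > 0 with the following property: if V is an autonomous smooth vector field on R^k with ‖V‖_{C^1} < ν and A: [0,1] × R^k → Hom(R^k, R^k) is smooth with ‖A‖_{C^0} < ν, then the fixed points of the time-one flow map of the time-dependent vector field W_t := (id + A_t)V are precisely the zeros of V. -/
/-!
STATEMENT 5: There exists `ν > 0` such that: if `V` is an autonomous smooth vector
field on `ℝᵏ` with `‖V‖_{C¹} < ν` and `A : [0,1] × ℝᵏ → Hom(ℝᵏ, ℝᵏ)` is smooth with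
`‖A‖_{C⁰} < ν`, then the fixed points of the time-one flow map of the time-dependent
vector field `W_t = (id + A_t)V` are precisely the zeros of `V`.
-/

noncomputable section

abbrev Ek (k : ℕ) := EuclideanSpace ℝ (Fin k)

theorem fixed_points_of_perturbed_flow (k : ℕ) :
    ∃ ν : ℝ, 0 < ν ∧
      ∀ (V : Ek k → Ek k) (A : ℝ → Ek k → (Ek k →L[ℝ] Ek k)),
        ContDiff ℝ (⊤ : ℕ∞) V →
        -- `‖V‖_{C¹} < ν`:
        (∀ x, ‖V x‖ < ν) → (∀ x, ‖fderiv ℝ V x‖ < ν) →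
        -- `A` smooth with `‖A‖_{C⁰} < ν` on `[0,1] × ℝᵏ`:
        ContDiff ℝ (⊤ : ℕ∞) (fun q : ℝ × Ek k => A q.1 q.2) →
        (∀ t ∈ Set.Icc (0 : ℝ) 1, ∀ x, ‖A t x‖ < ν) →
        -- `χ` the flow of `W_t = (id + A_t)V`:
        ∀ χ : ℝ → Ek k → Ek k,
          (∀ x, χ 0 x = x) →
          (∀ x, ∀ t ∈ Set.Icc (0 : ℝ) 1,
            HasDerivAt (fun s => χ s x)
              (V (χ t x) + A t (χ t x) (V (χ t x))) t) →
          -- fixed points of the time-one map are exactly the zeros of `V`: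
          ∀ p, χ 1 p = p ↔ V p = 0 := by
  refine ⟨1/100, by norm_num, ?_⟩
  intro V A hV hVν hDVν hA hAν χ hχ0 hχ' p
  -- V is (1/100)-Lipschitz
  have hVlip : ∀ x y : Ek k, ‖V x - V y‖ ≤ (1/100) * ‖x - y‖ := by
    intro x y
    exact (convex_univ (𝕜 := ℝ) (E := Ek k)).norm_image_sub_le_of_norm_fderiv_le
      (fun z _ => (hV.differentiable (by simp)).differentiableAt)
      (fun z _ => (hDVν z).le) (Set.mem_univ y) (Set.mem_univ x)
  -- the main Gronwall estimate
  have key : ∀ t ∈ Set.Icc (0:ℝ) 1, ‖χ t p - p‖ ≤ 3 * ‖V p‖ := by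
    have hf : ContinuousOn (fun t => χ t p - p) (Set.Icc 0 1) := fun t ht =>
      ((hχ' p t ht).continuousAt.continuousWithinAt).sub continuousWithinAt_const
    have hf' : ∀ t ∈ Set.Ico (0:ℝ) 1,
        HasDerivWithinAt (fun s => χ s p - p)
          (V (χ t p) + A t (χ t p) (V (χ t p))) (Set.Ici t) t := fun t ht =>
      ((hχ' p t (Set.Ico_subset_Icc_self ht)).sub_const p).hasDerivWithinAt
    have ha : ‖χ 0 p - p‖ ≤ 0 := by simp [hχ0 p]
    have bound : ∀ t ∈ Set.Ico (0:ℝ) 1,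
        ‖V (χ t p) + A t (χ t p) (V (χ t p))‖ ≤ (1/50) * ‖χ t p - p‖ + 2 * ‖V p‖ := by
      intro t ht
      have hVχ : ‖V (χ t p)‖ ≤ ‖V p‖ + (1/100) * ‖χ t p - p‖ := by
        have := hVlip (χ t p) p
        have h2 := norm_sub_norm_le (V (χ t p)) (V p)
        linarith
      have hAop : ‖A t (χ t p) (V (χ t p))‖ ≤ (1/100) * ‖V (χ t p)‖ := by
        calc ‖A t (χ t p) (V (χ t p))‖ ≤ ‖A t (χ t p)‖ * ‖V (χ t p)‖ :=
              (A t (χ t p)).le_opNorm _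
          _ ≤ (1/100) * ‖V (χ t p)‖ := by
              have := (hAν t (Set.Ico_subset_Icc_self ht) (χ t p)).le
              exact mul_le_mul_of_nonneg_right this (norm_nonneg _)
      calc ‖V (χ t p) + A t (χ t p) (V (χ t p))‖
          ≤ ‖V (χ t p)‖ + ‖A t (χ t p) (V (χ t p))‖ := norm_add_le _ _
        _ ≤ ‖V (χ t p)‖ + (1/100) * ‖V (χ t p)‖ := by linarith
        _ ≤ (1/50) * ‖χ t p - p‖ + 2 * ‖V p‖ := by
            have h0 : (0:ℝ) ≤ ‖χ t p - p‖ := norm_nonneg _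
            nlinarith [norm_nonneg (V p)]
    intro t ht
    have := norm_le_gronwallBound_of_norm_deriv_right_le hf hf' ha bound t ht
    have hKne : (1/50 : ℝ) ≠ 0 := by norm_num
    rw [gronwallBound_of_K_ne_0 hKne] at this
    simp only [zero_mul, zero_add, sub_zero] at this
    have hexp : Real.exp (1/50 * t) ≤ 50/49 := by
      have h1 : (0:ℝ) ≤ 1/50 * t := by nlinarith [ht.1]
      have h2 : (1/50 : ℝ) * t < 1 := by nlinarith [ht.2]
      have := Real.exp_bound_div_one_sub_of_interval h1 h2
      have h3 : (1:ℝ) / (1 - 1/50 * t) ≤ 50/49 := by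
        rw [div_le_div_iff₀ (by nlinarith [ht.2]) (by norm_num)]
        nlinarith [ht.2]
      linarith
    have hVp : (0:ℝ) ≤ ‖V p‖ := norm_nonneg _
    calc ‖χ t p - p‖ ≤ 2 * ‖V p‖ / (1/50) * (Real.exp (1/50 * t) - 1) := this
      _ ≤ 2 * ‖V p‖ / (1/50) * (50/49 - 1) := by
          apply mul_le_mul_of_nonneg_left (by linarith) (by positivity)
      _ ≤ 3 * ‖V p‖ := by rw [div_eq_mul_inv]; nlinarith
  constructor
  · -- fixed point ⇒ zero
    intro hfix
    -- FTC: the total displacement is the integral of the velocity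
    have hχcont : ContinuousOn (fun t => χ t p) (Set.Icc 0 1) := fun t ht =>
      (hχ' p t ht).continuousAt.continuousWithinAt
    set W : ℝ → Ek k := fun t => V (χ t p) + A t (χ t p) (V (χ t p)) with hW
    have hWcont : ContinuousOn W (Set.Icc 0 1) := by
      have hVc : Continuous V := hV.continuous
      have hAc : Continuous (fun q : ℝ × Ek k => A q.1 q.2) := hA.continuous
      have h1 : ContinuousOn (fun t => V (χ t p)) (Set.Icc 0 1) := hVc.comp_continuousOn hχcont
      have h2 : ContinuousOn (fun t => A t (χ t p)) (Set.Icc 0 1) := by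
        exact hAc.comp_continuousOn (continuousOn_id.prodMk hχcont)
      exact h1.add (h2.clm_apply h1)
    have hint : IntervalIntegrable W MeasureTheory.volume 0 1 := by
      apply ContinuousOn.intervalIntegrable
      rwa [Set.uIcc_of_le (by norm_num : (0:ℝ) ≤ 1)]
    have hftc : ∫ t in (0:ℝ)..1, W t = χ 1 p - χ 0 p := by
      exact intervalIntegral.integral_eq_sub_of_hasDerivAt
        (f := fun s => χ s p)
        (fun t ht => hχ' p t (by rwa [Set.uIcc_of_le (by norm_num : (0:ℝ) ≤ 1)] at ht))
        hint
    have hzero : ∫ t in (0:ℝ)..1, W t = 0 := by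
      rw [hftc, hfix, hχ0 p, sub_self]
    -- V p = ∫ (V p - W t)
    have hVpint : V p = ∫ t in (0:ℝ)..1, (V p - W t) := by
      rw [intervalIntegral.integral_sub intervalIntegrable_const hint, hzero, sub_zero,
        intervalIntegral.integral_const]
      simp
    have hnorm : ‖∫ t in (0:ℝ)..1, (V p - W t)‖ ≤ (5/100) * ‖V p‖ * |(1:ℝ) - 0| := by
      apply intervalIntegral.norm_integral_le_of_norm_le_const
      intro t ht
      rw [Set.uIoc_of_le (by norm_num : (0:ℝ) ≤ 1)] at ht
      have ht' : t ∈ Set.Icc (0:ℝ) 1 := Set.Ioc_subset_Icc_self ht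
      have hk := key t ht'
      have hl := hVlip p (χ t p)
      have hVχ : ‖V (χ t p)‖ ≤ ‖V p‖ + (1/100) * ‖χ t p - p‖ := by
        have := hVlip (χ t p) p
        have h2 := norm_sub_norm_le (V (χ t p)) (V p)
        linarith
      have hAop : ‖A t (χ t p) (V (χ t p))‖ ≤ (1/100) * ‖V (χ t p)‖ := by
        calc ‖A t (χ t p) (V (χ t p))‖ ≤ ‖A t (χ t p)‖ * ‖V (χ t p)‖ :=
              (A t (χ t p)).le_opNorm _
          _ ≤ (1/100) * ‖V (χ t p)‖ :=
              mul_le_mul_of_nonneg_right (hAν t ht' (χ t p)).le (norm_nonneg _)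
      have hpmχ : ‖p - χ t p‖ = ‖χ t p - p‖ := norm_sub_rev _ _
      calc ‖V p - W t‖ = ‖(V p - V (χ t p)) - A t (χ t p) (V (χ t p))‖ := by
            simp only [hW, sub_add_eq_sub_sub]
        _ ≤ ‖V p - V (χ t p)‖ + ‖A t (χ t p) (V (χ t p))‖ := norm_sub_le _ _
        _ ≤ (1/100) * ‖χ t p - p‖ + (1/100) * ‖V (χ t p)‖ := by
            rw [hpmχ] at hl; linarith
        _ ≤ (5/100) * ‖V p‖ := by nlinarith [norm_nonneg (V p), norm_nonneg (χ t p - p)]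
    have : ‖V p‖ ≤ 0 := by
      have heq := congrArg norm hVpint
      simp only [sub_zero, abs_one, mul_one] at hnorm
      rw [heq]
      linarith
    exact norm_le_zero_iff.mp this
  · -- zero ⇒ fixed point
    intro hVp
    have := key 1 (by norm_num)
    rw [hVp, norm_zero, mul_zero] at this
    have : χ 1 p - p = 0 := norm_le_zero_iff.mp this
    exact sub_eq_zero.mp this

end
end

section
/- In the setting of the proof of the non-autonomous fixed point lemma: fix r > 0 and p ∈ R^k with |V(p)| = r > 0, and suppose that on the ball B_R(p) of radius R around p, for all t ∈ [0,1] and x ∈ B_R(p) one has |W_t(x)| < R and |W_t(x) − V(p)| < |V(p)|. Then the solution γ of γ' = W_t(γ), γ(0) = p stays in B_R(p) for t ∈ [0,1], the function t ↦ ⟨γ(t), V(p)⟩ is strictly increasing, and in particular γ(1) ≠ p. -/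
/-!
STATEMENT 6: If `|V(p)| = r > 0` and on the ball `B_R(p)` one has `|W_t(x)| < R` and
`|W_t(x) − V(p)| < |V(p)|` for all `t ∈ [0,1]`, then the solution `γ` of
`γ' = W_t(γ)`, `γ(0) = p` stays in `B_R(p)` for `t ∈ [0,1]`, the function
`t ↦ ⟨γ(t), V(p)⟩` is strictly increasing on `[0,1]`, and in particular `γ(1) ≠ p`.
-/

noncomputable section

theorem solution_escapes (k : ℕ) (V : Ek k → Ek k) (W : ℝ → Ek k → Ek k)
    (p : Ek k) (r R : ℝ) (hr : ‖V p‖ = r) (hr0 : 0 < r) (hR : 0 < R)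
    (hW : ∀ t ∈ Set.Icc (0 : ℝ) 1, ∀ x ∈ Metric.ball p R,
      ‖W t x‖ < R ∧ ‖W t x - V p‖ < ‖V p‖)
    (γ : ℝ → Ek k) (hγ0 : γ 0 = p)
    (hode : ∀ t ∈ Set.Icc (0 : ℝ) 1, HasDerivAt γ (W t (γ t)) t) :
    (∀ t ∈ Set.Icc (0 : ℝ) 1, γ t ∈ Metric.ball p R) ∧
    StrictMonoOn (fun t => (inner ℝ (γ t) (V p) : ℝ)) (Set.Icc (0 : ℝ) 1) ∧
    γ 1 ≠ p := by
  -- continuity of γ on [0,1]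
  have hcont : ∀ t ∈ Set.Icc (0:ℝ) 1, ContinuousAt γ t := fun t ht => (hode t ht).continuousAt
  -- Key a priori bound `‖γ t - p‖ ≤ R * t` on [0,1]
  have key : ∀ t ∈ Set.Icc (0:ℝ) 1, ‖γ t - p‖ ≤ R * t := by
    by_contra hcon
    push_neg at hcon
    obtain ⟨t₁, ht₁, ht₁'⟩ := hcon
    set B : Set ℝ := {t | t ∈ Set.Icc (0:ℝ) 1 ∧ R * t < ‖γ t - p‖} with hBdef
    have hBne : B.Nonempty := ⟨t₁, ht₁, ht₁'⟩
    have hBsub : B ⊆ Set.Icc 0 1 := fun t ht => ht.1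
    have hBbdd : BddBelow B := ⟨0, fun t ht => (hBsub ht).1⟩
    set t₀ := sInf B with ht₀def
    have ht₀le : t₀ ≤ 1 := le_trans (csInf_le hBbdd ⟨ht₁, ht₁'⟩) ht₁.2
    have ht₀0 : 0 ≤ t₀ := le_csInf hBne (fun t ht => (hBsub ht).1)
    have ht₀mem : t₀ ∈ Set.Icc (0:ℝ) 1 := ⟨ht₀0, ht₀le⟩
    have claim_lt : ∀ s ∈ Set.Icc (0:ℝ) 1, s < t₀ → ‖γ s - p‖ ≤ R * s := by
      intro s hs hlt
      by_contra h
      exact absurd (csInf_le hBbdd ⟨hs, lt_of_not_ge (fun h' => h (by linarith))⟩)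
        (not_le.2 hlt)
    have claim0 : ∀ s ∈ Set.Icc (0:ℝ) t₀, ‖γ s - p‖ ≤ R * s := by
      intro s hs
      rcases lt_or_eq_of_le hs.2 with h | h
      · exact claim_lt s ⟨hs.1, le_trans hs.2 ht₀le⟩ h
      · subst h
        rcases eq_or_lt_of_le ht₀0 with h0 | h0
        · rw [← h0, hγ0]; simp
        · have hten : Filter.Tendsto (fun s => ‖γ s - p‖ - R * s) (nhdsWithin t₀ (Set.Ico 0 t₀))
              (nhds (‖γ t₀ - p‖ - R * t₀)) := by
            exact (((hcont t₀ ht₀mem).sub continuousAt_const).norm.sub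
              (continuousAt_const.mul continuousAt_id)).continuousWithinAt.tendsto
          haveI : Filter.NeBot (nhdsWithin t₀ (Set.Ico 0 t₀)) :=
            right_nhdsWithin_Ico_neBot h0
          have hle : ∀ᶠ x in nhdsWithin t₀ (Set.Ico 0 t₀),
              (fun s => ‖γ s - p‖ - R * s) x ≤ 0 := by
            filter_upwards [self_mem_nhdsWithin] with x hx
            have := claim_lt x ⟨hx.1, le_trans hx.2.le ht₀le⟩ hx.2
            linarith
          have := le_of_tendsto hten hle
          linarith
    have ht₀notB : t₀ ∉ B := by
      intro h
      exact absurd (claim0 t₀ ⟨ht₀0, le_rfl⟩) (not_le.2 h.2)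
    rcases eq_or_lt_of_le ht₀le with h1 | h1
    · -- t₀ = 1 : every element of B equals t₀, contradiction
      obtain ⟨b, hb⟩ := hBne
      have hb1 : b = t₀ := le_antisymm (h1 ▸ (hBsub hb).2) (csInf_le hBbdd hb)
      exact ht₀notB (hb1 ▸ hb)
    · -- t₀ < 1 : extend the bound a bit past t₀
      have hball₀ : γ t₀ ∈ Metric.ball p R := by
        rw [Metric.mem_ball, dist_eq_norm]
        calc ‖γ t₀ - p‖ ≤ R * t₀ := claim0 t₀ ⟨ht₀0, le_rfl⟩
          _ < R * 1 := by nlinarith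
          _ = R := mul_one R
      have hev : ∀ᶠ s in nhds t₀, γ s ∈ Metric.ball p R :=
        (hcont t₀ ht₀mem).eventually_mem (Metric.isOpen_ball.mem_nhds hball₀)
      obtain ⟨δ, hδ0, hδ⟩ := Metric.eventually_nhds_iff.1 hev
      set ε := min (δ/2) (1 - t₀) with hεdef
      have hε0 : 0 < ε := lt_min (by linarith) (by linarith)
      have hin : ∀ s ∈ Set.Icc t₀ (t₀ + ε), γ s ∈ Metric.ball p R ∧ s ∈ Set.Icc (0:ℝ) 1 := by
        intro s hs
        have hs01 : s ∈ Set.Icc (0:ℝ) 1 := by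
          constructor
          · linarith [hs.1]
          · have := min_le_right (δ/2) (1 - t₀)
            have := hs.2; simp only [hεdef] at this ⊢; linarith
        refine ⟨hδ ?_, hs01⟩
        rw [Real.dist_eq, abs_of_nonneg (by linarith [hs.1])]
        have := min_le_left (δ/2) (1 - t₀)
        have := hs.2; simp only [hεdef] at this ⊢; linarith
      have hlip : ∀ t ∈ Set.Icc t₀ (t₀ + ε), ‖γ t - γ t₀‖ ≤ R * ‖t - t₀‖ := by
        intro t ht
        refine Convex.norm_image_sub_le_of_norm_hasDerivWithin_le
          (f' := fun s => W s (γ s)) (fun s hs => ((hode s (hin s hs).2).hasDerivWithinAt))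
          (fun s hs => le_of_lt (hW s (hin s hs).2 _ (hin s hs).1).1)
          (convex_Icc _ _) (Set.left_mem_Icc.2 (by linarith)) ht
      have hnotB : ∀ t ∈ Set.Icc t₀ (t₀ + ε), t ∉ B := by
        intro t ht htB
        have h1 : ‖γ t - p‖ ≤ ‖γ t - γ t₀‖ + ‖γ t₀ - p‖ := norm_sub_le_norm_sub_add_norm_sub _ _ _
        have h2 := hlip t ht
        have h3 := claim0 t₀ ⟨ht₀0, le_rfl⟩
        rw [Real.norm_eq_abs, abs_of_nonneg (by linarith [ht.1])] at h2
        have : ‖γ t - p‖ ≤ R * t := by nlinarith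
        exact absurd this (not_le.2 htB.2)
      obtain ⟨b, hbB, hblt⟩ := exists_lt_of_csInf_lt hBne (show sInf B < t₀ + ε by linarith)
      exact hnotB b ⟨csInf_le hBbdd hbB, hblt.le⟩ hbB
  -- membership in the ball for t < 1
  have hmemlt : ∀ t ∈ Set.Ico (0:ℝ) 1, γ t ∈ Metric.ball p R := by
    intro t ht
    rw [Metric.mem_ball, dist_eq_norm]
    calc ‖γ t - p‖ ≤ R * t := key t ⟨ht.1, ht.2.le⟩
      _ < R * 1 := by nlinarith [ht.2]
      _ = R := mul_one R
  -- integral argument for strict bound at t = 1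
  have hderiv_eq : ∀ t ∈ Set.Icc (0:ℝ) 1, deriv γ t = W t (γ t) := fun t ht => (hode t ht).deriv
  have hmeas : Measurable (deriv γ) := measurable_deriv γ
  have haemeas : MeasureTheory.AEStronglyMeasurable (deriv γ)
      (MeasureTheory.volume.restrict (Set.Icc (0:ℝ) 1)) := hmeas.aestronglyMeasurable
  have hae1 : ∀ᵐ s ∂(MeasureTheory.volume.restrict (Set.Icc (0:ℝ) 1)), s ≠ 1 := by
    refine MeasureTheory.ae_iff.2 ?_
    have : {a : ℝ | ¬a ≠ 1} = {1} := by ext x; simp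
    rw [this]
    exact le_antisymm (le_trans (MeasureTheory.Measure.restrict_apply_le _ _)
      (le_of_eq Real.volume_singleton)) (zero_le)
  have hbound_ae : ∀ᵐ s ∂(MeasureTheory.volume.restrict (Set.Icc (0:ℝ) 1)),
      ‖deriv γ s‖ ≤ R := by
    filter_upwards [hae1, MeasureTheory.ae_restrict_mem measurableSet_Icc] with s hs1 hs
    rw [hderiv_eq s hs]
    exact le_of_lt (hW s hs _ (hmemlt s ⟨hs.1, lt_of_le_of_ne hs.2 hs1⟩)).1
  have hint : MeasureTheory.IntegrableOn (deriv γ) (Set.Icc (0:ℝ) 1) :=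
    MeasureTheory.Integrable.mono' (MeasureTheory.integrable_const R) haemeas hbound_ae
  have hii : IntervalIntegrable (deriv γ) MeasureTheory.volume 0 1 := by
    apply MeasureTheory.IntegrableOn.intervalIntegrable
    rwa [Set.uIcc_of_le zero_le_one]
  have hftc : ∫ s in (0:ℝ)..1, deriv γ s = γ 1 - γ 0 := by
    apply intervalIntegral.integral_eq_sub_of_hasDerivAt
    · intro t ht
      rw [Set.uIcc_of_le zero_le_one] at ht
      exact (hderiv_eq t ht) ▸ hode t ht
    · exact hii
  have hnormbd : ‖γ 1 - γ 0‖ ≤ ∫ s in (0:ℝ)..1, ‖deriv γ s‖ := by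
    rw [← hftc]
    exact intervalIntegral.norm_integral_le_integral_norm zero_le_one
  have hstrict : (∫ s in (0:ℝ)..1, ‖deriv γ s‖) < R := by
    have hfi : IntervalIntegrable (fun s => R - ‖deriv γ s‖) MeasureTheory.volume 0 1 :=
      intervalIntegrable_const.sub hii.norm
    have hnn : 0 ≤ᵐ[MeasureTheory.volume.restrict (Set.uIoc (0:ℝ) 1)]
        (fun s => R - ‖deriv γ s‖) := by
      rw [Set.uIoc_of_le zero_le_one]
      have hb : ∀ᵐ s ∂(MeasureTheory.volume.restrict (Set.Ioc (0:ℝ) 1)),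
          s ∈ Set.Ioc (0:ℝ) 1 := MeasureTheory.ae_restrict_mem measurableSet_Ioc
      have h1 : ∀ᵐ s ∂(MeasureTheory.volume.restrict (Set.Ioc (0:ℝ) 1)), s ≠ 1 := by
        refine MeasureTheory.ae_iff.2 ?_
        have : {a : ℝ | ¬a ≠ 1} = {1} := by ext x; simp
        rw [this]
        exact le_antisymm (le_trans (MeasureTheory.Measure.restrict_apply_le _ _)
          (le_of_eq Real.volume_singleton)) (zero_le)
      filter_upwards [hb, h1] with s hs hs1
      have hs' : s ∈ Set.Ico (0:ℝ) 1 := ⟨hs.1.le, lt_of_le_of_ne hs.2 hs1⟩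
      have := (hW s ⟨hs'.1, hs'.2.le⟩ _ (hmemlt s hs')).1
      rw [hderiv_eq s ⟨hs'.1, hs'.2.le⟩]
      simp only [Pi.zero_apply]
      linarith
    have hpos : 0 < ∫ s in (0:ℝ)..1, (R - ‖deriv γ s‖) := by
      rw [intervalIntegral.integral_pos_iff_support_of_nonneg_ae' hnn hfi]
      refine ⟨zero_lt_one, ?_⟩
      have hsub : Set.Ioo (0:ℝ) 1 ⊆ Function.support (fun s => R - ‖deriv γ s‖) ∩
          Set.Ioc (0:ℝ) 1 := by
        intro s hs
        refine ⟨?_, hs.1, hs.2.le⟩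
        have hs' : s ∈ Set.Ico (0:ℝ) 1 := ⟨hs.1.le, hs.2⟩
        have := (hW s ⟨hs'.1, hs'.2.le⟩ _ (hmemlt s hs')).1
        rw [Function.mem_support, hderiv_eq s ⟨hs'.1, hs'.2.le⟩]
        intro h; linarith [sub_eq_zero.1 h]
      calc (0:ENNReal) < 1 := by norm_num
        _ = MeasureTheory.volume (Set.Ioo (0:ℝ) 1) := by rw [Real.volume_Ioo]; norm_num
        _ ≤ _ := MeasureTheory.measure_mono hsub
    rw [intervalIntegral.integral_sub intervalIntegrable_const hii.norm,
      intervalIntegral.integral_const] at hpos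
    simp only [sub_zero, one_smul, smul_eq_mul] at hpos
    linarith
  have h1lt : ‖γ 1 - p‖ < R := by
    rw [hγ0] at hnormbd
    linarith
  have hmem : ∀ t ∈ Set.Icc (0:ℝ) 1, γ t ∈ Metric.ball p R := by
    intro t ht
    rcases lt_or_eq_of_le ht.2 with h | h
    · exact hmemlt t ⟨ht.1, h⟩
    · subst h
      rw [Metric.mem_ball, dist_eq_norm]
      exact h1lt
  -- positivity of the inner product with V p
  have hip : ∀ t ∈ Set.Icc (0:ℝ) 1, 0 < (inner ℝ (W t (γ t)) (V p) : ℝ) := by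
    intro t ht
    obtain ⟨h1, h2⟩ := hW t ht _ (hmem t ht)
    have hz : W t (γ t) ≠ 0 := by
      intro h
      rw [h, zero_sub, norm_neg] at h2
      exact lt_irrefl _ h2
    have hsq := norm_sub_sq_real (W t (γ t)) (V p)
    have hWpos : 0 < ‖W t (γ t)‖ := norm_pos_iff.2 hz
    nlinarith [norm_nonneg (W t (γ t) - V p), norm_nonneg (V p),
      mul_self_lt_mul_self (norm_nonneg _) h2]
  -- the function t ↦ ⟨γ t, V p⟩ and its derivative
  have hf' : ∀ t ∈ Set.Icc (0:ℝ) 1,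
      HasDerivAt (fun t => (inner ℝ (γ t) (V p) : ℝ)) (inner ℝ (W t (γ t)) (V p)) t := by
    intro t ht
    have := HasDerivAt.inner ℝ (hode t ht) (hasDerivAt_const t (V p))
    simpa using this
  have hmono : StrictMonoOn (fun t => (inner ℝ (γ t) (V p) : ℝ)) (Set.Icc (0:ℝ) 1) := by
    apply strictMonoOn_of_deriv_pos (convex_Icc 0 1)
    · intro t ht
      exact ((hf' t ht).continuousAt).continuousWithinAt
    · intro t ht
      rw [interior_Icc] at ht
      have ht' : t ∈ Set.Icc (0:ℝ) 1 := ⟨ht.1.le, ht.2.le⟩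
      rw [(hf' t ht').deriv]
      exact hip t ht'
  refine ⟨hmem, hmono, ?_⟩
  intro h
  have := hmono (Set.left_mem_Icc.2 zero_le_one) (Set.right_mem_Icc.2 zero_le_one) zero_lt_one
  simp only [hγ0, h] at this
  exact lt_irrefl _ this

end
end

section
/- Let S: M → R be a smooth function on a closed Riemannian manifold and suppose there are constants c ≥ 1 and a vector field V with (1/c)|V| ≤ |dS| ≤ c|V| pointwise, such that for each point p with r := |V(p)| > 0 one has r/2 ≤ |V| ≤ 2r on the ball of radius 3rc centered at p. Then S satisfies the pointwise bound S ≥ min_M S + (1/(4c⁴))|dS|². -/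
/-!
STATEMENT 9: Let `S : M → ℝ` be a smooth function on a closed Riemannian manifold and
suppose there are a constant `c ≥ 1` and a vector field `V` with
`(1/c)|V| ≤ |dS| ≤ c|V|` pointwise, and such that for each `p` with `r := |V(p)| > 0`
one has `r/2 ≤ |V| ≤ 2r` on the ball of radius `3rc` around `p`.  Then
`S ≥ min_M S + (1/(4c⁴))|dS|²` pointwise.

Formalization: `M` is a compact metric space, `DS p` stands for `|dS|_p` and `V p`
for `|V(p)|`; the negative gradient flow of `S` is encoded by the hypothesis `hflow`:
through each point there is a curve `γ` with `γ(0) = p`, along which `S` decreases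
with rate `|dS|²` and whose speed is bounded by `|dS|` (so
`dist(γ(a), γ(b)) ≤ ∫ₐᵇ |dS|(γ(t)) dt`).
-/

open MeasureTheory

noncomputable section

theorem lower_bound_via_gradient_flow
    {M : Type*} [MetricSpace M] [CompactSpace M] [Nonempty M]
    (S : M → ℝ) (hS : Continuous S)
    (DS V : M → ℝ)                                -- `DS p = |dS|_p`, `V p = |V(p)|`
    (hDS : ∀ p, 0 ≤ DS p) (hV : ∀ p, 0 ≤ V p)
    (c : ℝ) (hc : 1 ≤ c)
    (hcomp : ∀ p, c⁻¹ * V p ≤ DS p ∧ DS p ≤ c * V p)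
    (hball : ∀ p, 0 < V p →
      ∀ x ∈ Metric.closedBall p (3 * V p * c), V p / 2 ≤ V x ∧ V x ≤ 2 * V p)
    -- the negative gradient flow of `S`:
    (hflow : ∀ p : M, ∃ γ : ℝ → M, γ 0 = p ∧
      (∀ t : ℝ, HasDerivAt (fun s => S (γ s)) (-(DS (γ t)) ^ 2) t) ∧
      (∀ a b : ℝ, a ≤ b → dist (γ a) (γ b) ≤ ∫ t in a..b, DS (γ t))) :
    ∀ p, (⨅ q, S q) + (1 / (4 * c ^ 4)) * (DS p) ^ 2 ≤ S p := by
  classical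
  have hc0 : (0:ℝ) < c := lt_of_lt_of_le one_pos hc
  -- the infimum is attained / S is bounded below
  obtain ⟨q0, -, hq0⟩ := isCompact_univ.exists_isMinOn Set.univ_nonempty hS.continuousOn
  have hq0' : ∀ y, S q0 ≤ S y := fun y => (isMinOn_iff.mp hq0) y (Set.mem_univ y)
  have hbdd : BddBelow (Set.range S) := ⟨S q0, by rintro _ ⟨x, rfl⟩; exact hq0' x⟩
  have hInf : ∀ x, (⨅ q, S q) ≤ S x := fun x => ciInf_le hbdd x
  intro p
  rcases eq_or_lt_of_le (hV p) with hr | hr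
  · -- degenerate case: V p = 0, hence DS p = 0
    have hDSp : DS p = 0 := le_antisymm (by
      have := (hcomp p).2
      rw [← hr, mul_zero] at this
      exact this) (hDS p)
    simpa [hDSp] using hInf p
  · -- main case
    set r : ℝ := V p with hrdef
    have hrc : 0 < r * c := mul_pos hr hc0
    obtain ⟨γ, hγ0, hd, hdist⟩ := hflow p
    set f : ℝ → ℝ := fun t => S (γ t) with hf
    set g : ℝ → ℝ := fun t => DS (γ t) with hg
    have hd' : ∀ t, HasDerivAt f (-(g t) ^ 2) t := hd
    have hgnn : ∀ t, 0 ≤ g t := fun t => hDS _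
    have hdiff : Differentiable ℝ f := fun t => (hd' t).differentiableAt
    -- integrability of g² on Ioc a b
    have hsq : ∀ a b : ℝ, IntegrableOn (fun t => (g t) ^ 2) (Set.Ioc a b) := by
      intro a b
      refine intervalIntegral.integrableOn_deriv_of_nonneg (g := fun t => -(f t))
        (hdiff.neg.continuous.continuousOn) (fun x _ => ?_) (fun x _ => by positivity)
      exact (hd' x).neg.congr_deriv (neg_neg _)
    have hsqi : ∀ a b : ℝ, IntervalIntegrable (fun t => (g t) ^ 2) volume a b :=
      fun a b => ⟨hsq a b, hsq b a⟩
    -- g is interval integrable (bounded by 1 + g²)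
    have hgon : ∀ a b : ℝ, IntegrableOn g (Set.Ioc a b) := by
      intro a b
      have h2 := hsq a b
      have hm : AEStronglyMeasurable g (volume.restrict (Set.Ioc a b)) := by
        have hgs : g = fun t => Real.sqrt ((g t) ^ 2) :=
          funext fun t => by rw [Real.sqrt_sq (hgnn t)]
        rw [hgs]
        exact Real.continuous_sqrt.comp_aestronglyMeasurable h2.aestronglyMeasurable
      refine Integrable.mono ((integrable_const (1:ℝ)).add h2) hm ?_
      filter_upwards with t
      have h1 : (0:ℝ) ≤ 1 + (g t) ^ 2 := by positivity
      simp only [Pi.add_apply, Real.norm_eq_abs]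
      rw [abs_of_nonneg (hgnn t), abs_of_nonneg h1]
      nlinarith [sq_nonneg (g t - 1)]
    have hgi : ∀ a b : ℝ, IntervalIntegrable g volume a b := fun a b => ⟨hgon a b, hgon b a⟩
    -- distance bound from p
    have hdistp : ∀ t : ℝ, 0 ≤ t → dist p (γ t) ≤ ∫ s in (0:ℝ)..t, g s := by
      intro t ht
      have := hdist 0 t ht
      rwa [hγ0] at this
    -- points within 3rc of p have DS ≤ 2rc
    have hgball : ∀ x : M, dist p x ≤ 3 * r * c → DS x ≤ 2 * r * c := by
      intro x hx
      have hx' : x ∈ Metric.closedBall p (3 * V p * c) := by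
        rw [Metric.mem_closedBall, dist_comm]; exact hx
      have h2 := (hball p hr x hx').2
      calc DS x ≤ c * V x := (hcomp x).2
        _ ≤ c * (2 * V p) := by nlinarith
        _ = 2 * r * c := by rw [hrdef]; ring
    -- key bootstrap inequality
    have key : ∀ t, 0 ≤ t →
        (∀ s ∈ Set.Ico (0:ℝ) t, dist p (γ s) ≤ 3 * r * c) →
        dist p (γ t) ≤ 2 * r * c * t := by
      intro t ht hs
      have h1 : ∀ᵐ (u : ℝ), u ≠ t := by
        rw [ae_iff]
        simp only [ne_eq, not_not, Set.setOf_eq_eq_singleton]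
        exact Real.volume_singleton
      have hae : g ≤ᵐ[volume.restrict (Set.Icc 0 t)] fun _ => 2 * r * c := by
        filter_upwards [ae_restrict_mem measurableSet_Icc, ae_restrict_of_ae h1] with u hu hut
        have huIco : u ∈ Set.Ico (0:ℝ) t := ⟨hu.1, lt_of_le_of_ne hu.2 hut⟩
        exact hgball (γ u) (hs u huIco)
      calc dist p (γ t) ≤ ∫ s in (0:ℝ)..t, g s := hdistp t ht
        _ ≤ ∫ _ in (0:ℝ)..t, 2 * r * c :=
            intervalIntegral.integral_mono_ae_restrict ht (hgi 0 t)
              intervalIntegrable_const hae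
        _ = 2 * r * c * t := by simp; ring
    -- the trapping set
    set A : Set ℝ := {t | t ∈ Set.Icc (0:ℝ) 1 ∧
      ∀ s ∈ Set.Icc (0:ℝ) t, dist p (γ s) ≤ 2 * r * c} with hA
    have hA0 : (0:ℝ) ∈ A := by
      refine ⟨⟨le_refl 0, zero_le_one⟩, fun s hs => ?_⟩
      have hs0 : s = 0 := le_antisymm hs.2 hs.1
      rw [hs0, hγ0, dist_self]
      positivity
    have hAne : A.Nonempty := ⟨0, hA0⟩
    have hAbdd : BddAbove A := ⟨1, fun t ht => ht.1.2⟩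
    set T := sSup A with hTdef
    have hT0 : 0 ≤ T := le_csSup hAbdd hA0
    have hT1 : T ≤ 1 := csSup_le hAne fun t ht => ht.1.2
    have hlt : ∀ s, 0 ≤ s → s < T → dist p (γ s) ≤ 2 * r * c := by
      intro s hs0 hsT
      obtain ⟨t, htA, hst⟩ := exists_lt_of_lt_csSup hAne hsT
      exact htA.2 s ⟨hs0, hst.le⟩
    have hPT : ∀ s ∈ Set.Icc (0:ℝ) T, dist p (γ s) ≤ 2 * r * c * s := by
      intro s hs
      refine key s hs.1 ?_
      intro u hu
      have huT : u < T := lt_of_lt_of_le hu.2 hs.2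
      have := hlt u hu.1 huT
      nlinarith
    have hTA : T ∈ A := by
      refine ⟨⟨hT0, hT1⟩, fun s hs => ?_⟩
      have h1 := hPT s hs
      have hs1 : s ≤ 1 := hs.2.trans hT1
      nlinarith
    have hT : T = 1 := by
      by_contra hne
      have hTlt : T < 1 := lt_of_le_of_ne hT1 hne
      set ε : ℝ := 2 * r * c * (1 - T) with hε
      have hε0 : 0 < ε := by nlinarith
      have hF : Continuous (fun b => ∫ s in T..b, g s) :=
        intervalIntegral.continuous_primitive hgi T
      have hF0 : (fun b => ∫ s in T..b, g s) T = 0 := intervalIntegral.integral_same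
      have hev : ∀ᶠ b in nhds T, (∫ s in T..b, g s) < ε := by
        have htd : Filter.Tendsto (fun b => ∫ s in T..b, g s) (nhds T) (nhds 0) := by
          rw [← hF0]; exact hF.tendsto T
        exact htd.eventually_lt_const hε0
      obtain ⟨δ, hδ0, hδ⟩ := Metric.eventually_nhds_iff.mp hev
      set t1 : ℝ := min 1 (T + δ / 2) with ht1def
      have hTt1 : T < t1 := lt_min hTlt (by linarith)
      have ht11 : t1 ≤ 1 := min_le_left _ _
      have ht1A : t1 ∈ A := by
        refine ⟨⟨hT0.trans hTt1.le, ht11⟩, fun s hs => ?_⟩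
        rcases le_or_gt s T with h | h
        · exact hTA.2 s ⟨hs.1, h⟩
        · have h1 : dist p (γ T) ≤ 2 * r * c * T := hPT T ⟨hT0, le_refl T⟩
          have h2 : dist (γ T) (γ s) ≤ ∫ u in T..s, g u := hdist T s h.le
          have h3 : (∫ u in T..s, g u) < ε := by
            apply hδ
            rw [Real.dist_eq, abs_of_nonneg (by linarith)]
            have : s ≤ T + δ / 2 := hs.2.trans (min_le_right _ _)
            linarith
          have := dist_triangle p (γ T) (γ s)
          have hεval : ε = 2 * r * c * (1 - T) := rfl
          nlinarith
      have := le_csSup hAbdd ht1A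
      linarith
    -- every point of [0,1] is trapped
    have hball1 : ∀ s ∈ Set.Icc (0:ℝ) 1, dist p (γ s) ≤ 2 * r * c := by
      rw [← hT]; exact hTA.2
    -- lower bound on g on [0,1]
    have hglb : ∀ s ∈ Set.Icc (0:ℝ) 1, r / (2 * c) ≤ g s := by
      intro s hs
      have hmem : γ s ∈ Metric.closedBall p (3 * V p * c) := by
        rw [Metric.mem_closedBall, dist_comm]
        exact (hball1 s hs).trans (by nlinarith)
      have h1 : V p / 2 ≤ V (γ s) := (hball p hr _ hmem).1
      have h2 : c⁻¹ * V (γ s) ≤ DS (γ s) := (hcomp _).1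
      have hcalc : r / (2 * c) = c⁻¹ * (r / 2) := by rw [inv_mul_eq_div, div_div]
      calc r / (2 * c) = c⁻¹ * (r / 2) := hcalc
        _ ≤ c⁻¹ * V (γ s) := by
            apply mul_le_mul_of_nonneg_left _ (inv_nonneg.mpr hc0.le)
            exact h1
        _ ≤ g s := h2
    -- lower bound on the integral of g²
    have hint : r ^ 2 / (4 * c ^ 2) ≤ ∫ t in (0:ℝ)..1, (g t) ^ 2 := by
      have heq : r ^ 2 / (4 * c ^ 2) = ∫ _ in (0:ℝ)..1, r ^ 2 / (4 * c ^ 2) := by simp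
      rw [heq]
      refine intervalIntegral.integral_mono_on zero_le_one intervalIntegrable_const (hsqi 0 1) ?_
      intro x hx
      have h := hglb x hx
      have h0 : 0 ≤ r / (2 * c) := by positivity
      have := pow_le_pow_left₀ h0 h 2
      calc r ^ 2 / (4 * c ^ 2) = (r / (2 * c)) ^ 2 := by ring
        _ ≤ (g x) ^ 2 := this
    -- fundamental theorem of calculus
    have hftc : f 1 - f 0 = ∫ t in (0:ℝ)..1, -(g t) ^ 2 :=
      (intervalIntegral.integral_eq_sub_of_hasDerivAt (fun t _ => hd' t)
        ((hsqi 0 1).neg)).symm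
    have hf1 : f 1 = f 0 - ∫ t in (0:ℝ)..1, (g t) ^ 2 := by
      rw [intervalIntegral.integral_neg] at hftc
      linarith
    have hf0 : f 0 = S p := by rw [hf]; simp [hγ0]
    have hfinal : S (γ 1) ≤ S p - r ^ 2 / (4 * c ^ 2) := by
      have : f 1 ≤ f 0 - r ^ 2 / (4 * c ^ 2) := by rw [hf1]; linarith
      rw [hf0] at this
      exact this
    -- convert to the stated bound
    have hDSp2 : (DS p) ^ 2 ≤ c ^ 2 * r ^ 2 := by
      have h1 := (hcomp p).2
      have h2 := hDS p
      nlinarith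
    have hconv : (1 / (4 * c ^ 4)) * (DS p) ^ 2 ≤ r ^ 2 / (4 * c ^ 2) := by
      have h4 : (0:ℝ) < 4 * c ^ 4 := by positivity
      calc (1 / (4 * c ^ 4)) * (DS p) ^ 2 ≤ (1 / (4 * c ^ 4)) * (c ^ 2 * r ^ 2) := by
            apply mul_le_mul_of_nonneg_left hDSp2 (by positivity)
        _ = r ^ 2 / (4 * c ^ 2) := by field_simp
    have := hInf (γ 1)
    linarith

end
end

section
/- Let α, β ∈ F(M, ξ) with φ*β = e^f α for some φ ∈ Cont_0(M, ξ) and f ∈ C^∞(M), and suppose d(α, β) = max_M f − min_M f. Then for every path {ψ_t}_{t∈[0,1]} ⊂ Cont_0(M, ξ) with ψ_0 = id and ψ_1 = φ^{−1}, the path γ(t) := ψ_t*(e^{tf}α) is a minimizing geodesic in (F(M, ξ), d) from α to β, i.e. Length(γ) = d(α, β). -/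
/-!
STATEMENT 14: If `φ*β = e^f α` with `d(α, β) = max f − min f`, then for every path
`{ψ_t} ⊆ Cont₀(M, ξ)` with `ψ₀ = id`, `ψ₁ = φ⁻¹`, the path `γ(t) = ψ_t*(e^{tf}α)` is
a minimizing geodesic from `α` to `β` for the Banach–Mazur pseudo-metric:
`Length(γ) = d(α, β)` (and `γ(0) = α`, `γ(1) = β`).

Formalization: as in the model of Statements 11–12, contact forms defining `ξ` are
identified with their conformal factors `u ∈ C(M, ℝ)` relative to a reference form,
the group `G = Cont₀(M, ξ)` acts on `M` and pulls back with conformal cocycle `g`.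
The length of a path is the supremum of `Σ d(γ(t_{j−1}), γ(t_j))` over all finite
subdivisions `0 = t₀ < … < t_k = 1` (here: monotone subdivisions).
-/

noncomputable section

variable {M : Type*} [TopologicalSpace M] [CompactSpace M] [Nonempty M]
variable {G : Type*} [Group G] [MulAction G M]

/-- Pullback action of a contactomorphism on conformal factors. -/
def pullC (hcont : ∀ φ : G, Continuous fun x : M => φ • x)
    (g : G → C(M, ℝ)) (φ : G) (u : C(M, ℝ)) : C(M, ℝ) :=
  u.comp ⟨fun x => φ • x, hcont φ⟩ + g φ

/-- The oscillation `max f − min f`. -/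
def oscC (f : C(M, ℝ)) : ℝ := (⨆ x, f x) - ⨅ x, f x

/-- The contact Banach–Mazur pseudo-metric. -/
def dBM (hcont : ∀ φ : G, Continuous fun x : M => φ • x)
    (g : G → C(M, ℝ)) (u v : C(M, ℝ)) : ℝ :=
  sInf {c | ∃ φ : G, c = oscC (pullC hcont g φ v - u)}

/-- The length of a path for a pseudo-metric `d`: the supremum of
`Σ_j d(γ(t_{j−1}), γ(t_j))` over all finite subdivisions `0 = t₀ ≤ … ≤ t_k = 1`. -/
def pathLength {X : Type*} (d : X → X → ℝ) (γ : ℝ → X) : ℝ :=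
  sSup {L | ∃ (k : ℕ) (t : Fin (k + 1) → ℝ), Monotone t ∧ t 0 = 0 ∧
    t (Fin.last k) = 1 ∧
    L = ∑ j : Fin k, d (γ (t j.castSucc)) (γ (t j.succ))}

/-! ### Auxiliary lemmas -/

lemma oscC_nonneg (f : C(M, ℝ)) : 0 ≤ oscC f := by
  have hA : BddAbove (Set.range f) := (isCompact_range f.continuous).bddAbove
  have hB : BddBelow (Set.range f) := (isCompact_range f.continuous).bddBelow
  obtain ⟨x⟩ := ‹Nonempty M›
  have h1 : f x ≤ ⨆ y, f y := le_ciSup hA x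
  have h2 : (⨅ y, f y) ≤ f x := ciInf_le hB x
  unfold oscC; linarith

lemma oscC_comp (hcont : ∀ φ : G, Continuous fun x : M => φ • x) (φ : G) (w : C(M, ℝ)) :
    oscC (w.comp ⟨fun x => φ • x, hcont φ⟩) = oscC w := by
  have hsurj : Function.Surjective (fun x : M => φ • x) :=
    fun y => ⟨φ⁻¹ • y, smul_inv_smul φ y⟩
  unfold oscC
  simp only [ContinuousMap.comp_apply, ContinuousMap.coe_mk]
  rw [hsurj.iSup_comp (fun y => w y), hsurj.iInf_comp (fun y => w y)]

lemma oscC_smul {c : ℝ} (hc : 0 ≤ c) (f : C(M, ℝ)) : oscC (c • f) = c * oscC f := by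
  unfold oscC
  simp only [ContinuousMap.smul_apply, smul_eq_mul]
  rw [← Real.mul_iSup_of_nonneg hc, ← Real.mul_iInf_of_nonneg hc]
  ring

lemma pullC_one (hcont : ∀ φ : G, Continuous fun x : M => φ • x)
    (g : G → C(M, ℝ)) (hg1 : g (1 : G) = 0) (w : C(M, ℝ)) :
    pullC hcont g 1 w = w := by
  unfold pullC
  rw [hg1]
  ext x
  simp [one_smul]

lemma pullC_comp (hcont : ∀ φ : G, Continuous fun x : M => φ • x)
    (g : G → C(M, ℝ))
    (hgmul : ∀ φ ψ : G, g (φ * ψ) = g ψ + (g φ).comp ⟨fun x => ψ • x, hcont ψ⟩)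
    (φ ψ : G) (w : C(M, ℝ)) :
    pullC hcont g ψ (pullC hcont g φ w) = pullC hcont g (φ * ψ) w := by
  unfold pullC
  rw [hgmul]
  ext x
  simp only [ContinuousMap.add_apply, ContinuousMap.comp_apply, ContinuousMap.coe_mk,
    mul_smul]
  ring

lemma pullC_sub (hcont : ∀ φ : G, Continuous fun x : M => φ • x)
    (g : G → C(M, ℝ)) (φ : G) (a b : C(M, ℝ)) :
    pullC hcont g φ a - pullC hcont g φ b = (a - b).comp ⟨fun x => φ • x, hcont φ⟩ := by
  unfold pullC
  ext x
  simp

lemma dBM_pull_right (hcont : ∀ φ : G, Continuous fun x : M => φ • x)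
    (g : G → C(M, ℝ))
    (hgmul : ∀ φ ψ : G, g (φ * ψ) = g ψ + (g φ).comp ⟨fun x => ψ • x, hcont ψ⟩)
    (χ : G) (w b : C(M, ℝ)) :
    dBM hcont g w (pullC hcont g χ b) = dBM hcont g w b := by
  unfold dBM
  congr 1
  ext c
  constructor
  · rintro ⟨φ, rfl⟩
    exact ⟨χ * φ, by rw [pullC_comp hcont g hgmul]⟩
  · rintro ⟨θ, rfl⟩
    refine ⟨χ⁻¹ * θ, ?_⟩
    rw [pullC_comp hcont g hgmul, mul_inv_cancel_left]

lemma dBM_pull_left (hcont : ∀ φ : G, Continuous fun x : M => φ • x)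
    (g : G → C(M, ℝ))
    (hgmul : ∀ φ ψ : G, g (φ * ψ) = g ψ + (g φ).comp ⟨fun x => ψ • x, hcont ψ⟩)
    (χ : G) (a b : C(M, ℝ)) :
    dBM hcont g (pullC hcont g χ a) b = dBM hcont g a b := by
  unfold dBM
  congr 1
  ext c
  constructor
  · rintro ⟨φ, rfl⟩
    refine ⟨φ * χ⁻¹, ?_⟩
    have h : pullC hcont g φ b = pullC hcont g χ (pullC hcont g (φ * χ⁻¹) b) := by
      rw [pullC_comp hcont g hgmul, inv_mul_cancel_right]
    rw [h, pullC_sub hcont g, oscC_comp hcont]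
  · rintro ⟨θ, rfl⟩
    refine ⟨θ * χ, ?_⟩
    rw [← pullC_comp hcont g hgmul, pullC_sub hcont g, oscC_comp hcont]

lemma dBM_bddBelow (hcont : ∀ φ : G, Continuous fun x : M => φ • x)
    (g : G → C(M, ℝ)) (a b : C(M, ℝ)) :
    BddBelow {c | ∃ φ : G, c = oscC (pullC hcont g φ b - a)} := by
  refine ⟨0, ?_⟩
  rintro c ⟨φ, rfl⟩
  exact oscC_nonneg _

lemma dBM_segment_le (hcont : ∀ φ : G, Continuous fun x : M => φ • x)
    (g : G → C(M, ℝ)) (hg1 : g (1 : G) = 0)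
    (u f : C(M, ℝ)) {s t : ℝ} (hst : s ≤ t) :
    dBM hcont g (u + s • f) (u + t • f) ≤ (t - s) * oscC f := by
  have hmem : (t - s) * oscC f ∈
      {c | ∃ φ : G, c = oscC (pullC hcont g φ (u + t • f) - (u + s • f))} := by
    refine ⟨1, ?_⟩
    rw [pullC_one hcont g hg1]
    have h : u + t • f - (u + s • f) = (t - s) • f := by
      ext x; simp; ring
    rw [h, oscC_smul (by linarith) f]
  exact csInf_le (dBM_bddBelow hcont g _ _) hmem

/-- If the Banach–Mazur infimum is attained, `γ(t) = ψ_t*(e^{tf}α)` is a minimizing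
geodesic from `α` to `β`. -/
theorem minimizing_geodesic
    (hcont : ∀ φ : G, Continuous fun x : M => φ • x)
    (g : G → C(M, ℝ)) (hg1 : g (1 : G) = 0)
    (hgmul : ∀ φ ψ : G, g (φ * ψ) = g ψ + (g φ).comp ⟨fun x => ψ • x, hcont ψ⟩)
    (u v f : C(M, ℝ)) (φ : G)
    (hpb : pullC hcont g φ v = u + f)                 -- `φ*β = e^f α`
    (hd : dBM hcont g u v = oscC f)                   -- the infimum is attained at `f`
    (ψ : ℝ → G) (hψ0 : ψ 0 = 1) (hψ1 : ψ 1 = φ⁻¹)     -- a path from `id` to `φ⁻¹`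
    (γ : ℝ → C(M, ℝ))
    (hγ : ∀ t : ℝ, γ t = pullC hcont g (ψ t) (u + t • f)) :  -- `γ(t) = ψ_t*(e^{tf}α)`
    γ 0 = u ∧ γ 1 = v ∧ pathLength (dBM hcont g) γ = dBM hcont g u v := by
  have hγ0 : γ 0 = u := by
    rw [hγ 0, hψ0, zero_smul, add_zero, pullC_one hcont g hg1]
  have hγ1 : γ 1 = v := by
    rw [hγ 1, hψ1, one_smul, ← hpb, pullC_comp hcont g hgmul, mul_inv_cancel,
      pullC_one hcont g hg1]
  have hdγ : ∀ s t : ℝ, dBM hcont g (γ s) (γ t) = dBM hcont g (u + s • f) (u + t • f) := by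
    intro s t
    rw [hγ s, hγ t, dBM_pull_right hcont g hgmul, dBM_pull_left hcont g hgmul]
  -- upper bound on every subdivision sum
  have hub : ∀ L ∈ {L | ∃ (k : ℕ) (t : Fin (k + 1) → ℝ), Monotone t ∧ t 0 = 0 ∧
      t (Fin.last k) = 1 ∧
      L = ∑ j : Fin k, dBM hcont g (γ (t j.castSucc)) (γ (t j.succ))}, L ≤ oscC f := by
    rintro L ⟨k, t, hm, h0, h1, rfl⟩
    have hle : ∀ j : Fin k, dBM hcont g (γ (t j.castSucc)) (γ (t j.succ)) ≤
        (t j.succ - t j.castSucc) * oscC f := by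
      intro j
      rw [hdγ]
      exact dBM_segment_le hcont g hg1 u f (hm (Fin.castSucc_lt_succ : j.castSucc < j.succ).le)
    calc ∑ j : Fin k, dBM hcont g (γ (t j.castSucc)) (γ (t j.succ))
        ≤ ∑ j : Fin k, (t j.succ - t j.castSucc) * oscC f :=
          Finset.sum_le_sum fun j _ => hle j
      _ = (∑ j : Fin k, (t j.succ - t j.castSucc)) * oscC f := by rw [Finset.sum_mul]
      _ = oscC f := by
          have htel : ∑ j : Fin k, (t j.succ - t j.castSucc) = 1 := by
            set T : ℕ → ℝ := fun n => t ⟨min n k, Nat.lt_succ_of_le (min_le_right n k)⟩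
              with hT
            have key : ∑ j : Fin k, (t j.succ - t j.castSucc) =
                ∑ j ∈ Finset.range k, (T (j + 1) - T j) := by
              rw [← Fin.sum_univ_eq_sum_range]
              apply Finset.sum_congr rfl
              intro j _
              have hj : j.val < k := j.isLt
              have e1 : T (j.val + 1) = t j.succ := by
                rw [hT]
                exact congrArg t (Fin.ext (show min (j.val + 1) k = j.val + 1 by omega))
              have e2 : T j.val = t j.castSucc := by
                rw [hT]
                exact congrArg t (Fin.ext (show min j.val k = j.val by omega))
              rw [e1, e2]
            rw [key, Finset.sum_range_sub]
            have eK : T k = 1 := by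
              rw [hT]
              have : (⟨min k k, Nat.lt_succ_of_le (min_le_right k k)⟩ : Fin (k + 1)) =
                  Fin.last k := Fin.ext (by simp [Fin.last])
              exact (congrArg t this).trans h1
            have e0 : T 0 = 0 := by
              rw [hT]
              have : (⟨min 0 k, Nat.lt_succ_of_le (min_le_right 0 k)⟩ : Fin (k + 1)) =
                  0 := Fin.ext (by simp [Nat.zero_min])
              simpa [this] using h0
            rw [eK, e0]; ring
          rw [htel, one_mul]
  refine ⟨hγ0, hγ1, ?_⟩
  rw [hd]
  unfold pathLength
  apply le_antisymm
  · exact Real.sSup_le hub (oscC_nonneg f)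
  · apply le_csSup ⟨oscC f, hub⟩
    refine ⟨1, fun j => (j.val : ℝ), ?_, ?_, ?_, ?_⟩
    · intro a b hab
      exact_mod_cast Nat.cast_le.mpr hab
    · simp
    · simp [Fin.last]
    · simp only [Fin.sum_univ_one, Fin.castSucc_zero, Fin.succ_zero_eq_one, Fin.val_zero,
        Fin.val_one, Nat.cast_zero, Nat.cast_one, hγ0, hγ1, hd]

end
end

section
/- Let α_0 be a Zoll contact form on a closed (2n−1)-manifold M with all Reeb orbits of minimal period sys(α_0), and let α be a contact form C²-close to α_0 admitting the quasi-invariant normal form φ*α = T e^h α_0 of Theorem qi, with min T e^h = min T and the short closed orbits having periods sys(α_0)·T over critical orbits of T. Then sys(α)^n / vol(M, α ∧ dα^{n−1}) ≤ sys(α_0)^n / vol(M, α_0 ∧ dα_0^{n−1}), with equality if and only if T is constant. -/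
/-!
STATEMENT 19: Local contact systolic inequality near a Zoll form.  If `α` admits the
quasi-invariant normal form `φ*α = T e^h α₀` relative to a Zoll form `α₀` (with
`min T e^h = min T`, `max T e^h = max T`, `sys(α) = sys(α₀)·min T`,
`vol(M, α∧dα^{n−1}) = ∫ Tⁿ e^{nh} dvol_{α₀}`), then
`sys(α)ⁿ / vol(α) ≤ sys(α₀)ⁿ / vol(α₀)`, with equality iff `T` is constant.

Formalization: `μ` is the volume measure `α₀ ∧ dα₀^{n−1}` (finite, positive on open
sets), `T, h ∈ C(M, ℝ)` with `T > 0`, and the quantities `sys(α)`, `vol(α)` are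
expressed through the normal form as in the quoted context.
-/

open MeasureTheory
open scoped ENNReal

noncomputable section

theorem local_systolic_inequality
    {M : Type*} [TopologicalSpace M] [CompactSpace M] [Nonempty M]
    [MeasurableSpace M] [BorelSpace M]
    (n : ℕ) (hn : 0 < n)
    (μ : Measure M) [IsFiniteMeasure μ] [μ.IsOpenPosMeasure]   -- `vol_{α₀}`
    (T h : C(M, ℝ)) (hT : ∀ p, 0 < T p)
    (sys₀ : ℝ) (hsys₀ : 0 < sys₀)                               -- `sys(α₀)`
    -- `min T e^h = min T` and `max T e^h = max T`:
    (hmin : (⨅ p, T p * Real.exp (h p)) = ⨅ p, T p)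
    (hmax : (⨆ p, T p * Real.exp (h p)) = ⨆ p, T p)
    (sysα volα : ℝ)
    (hsysα : sysα = sys₀ * ⨅ p, T p)                            -- `sys(α)`
    (hvolα : volα = ∫ p, (T p) ^ n * Real.exp (n * h p) ∂μ) :   -- `vol(M, α∧dα^{n−1})`
    sysα ^ n / volα ≤ sys₀ ^ n / (μ Set.univ).toReal ∧
    (sysα ^ n / volα = sys₀ ^ n / (μ Set.univ).toReal ↔ ∃ cT : ℝ, ∀ p, T p = cT) := by
  classical
  set f : M → ℝ := fun p => T p ^ n * Real.exp (n * h p) with hfdef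
  set g : M → ℝ := fun p => T p * Real.exp (h p) with hgdef
  have hgc : Continuous g := T.continuous.mul (Real.continuous_exp.comp h.continuous)
  have hfc : Continuous f :=
    (T.continuous.pow n).mul (Real.continuous_exp.comp (continuous_const.mul h.continuous))
  -- minimum of T
  obtain ⟨p0, -, hp0⟩ :=
    isCompact_univ.exists_isMinOn Set.univ_nonempty T.continuous.continuousOn
  have hp0' : ∀ p, T p0 ≤ T p := fun p => (isMinOn_iff.1 hp0) p trivial
  set m : ℝ := T p0 with hmdef
  have hmpos : 0 < m := hT p0
  have hbT : BddBelow (Set.range T) := ⟨m, Set.forall_mem_range.2 hp0'⟩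
  have hinfT : (⨅ p, T p) = m := le_antisymm (ciInf_le hbT p0) (le_ciInf hp0')
  -- minimum of g
  obtain ⟨q0, -, hq0⟩ :=
    isCompact_univ.exists_isMinOn Set.univ_nonempty hgc.continuousOn
  have hq0' : ∀ p, g q0 ≤ g p := fun p => (isMinOn_iff.1 hq0) p trivial
  have hbg : BddBelow (Set.range g) := ⟨g q0, Set.forall_mem_range.2 hq0'⟩
  have hinfg : (⨅ p, g p) = g q0 := le_antisymm (ciInf_le hbg q0) (le_ciInf hq0')
  have hmin' : (⨅ p, g p) = ⨅ p, T p := hmin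
  have hgm : ∀ p, m ≤ g p := by
    intro p
    have h1 : g q0 = m := by rw [← hinfg, hmin', hinfT]
    calc m = g q0 := h1.symm
      _ ≤ g p := hq0' p
  have hfg : ∀ p, f p = g p ^ n := by
    intro p
    simp only [hfdef, hgdef, mul_pow, Real.exp_nat_mul]
  have key : ∀ p, m ^ n ≤ f p := by
    intro p
    rw [hfg p]
    exact pow_le_pow_left₀ hmpos.le (hgm p) n
  -- integrability
  have hfint : Integrable f μ :=
    integrableOn_univ.1 (hfc.continuousOn.integrableOn_compact' isCompact_univ .univ)
  set V : ℝ := (μ Set.univ).toReal with hVdef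
  have hVpos : 0 < V :=
    ENNReal.toReal_pos ((isOpen_univ.measure_pos μ Set.univ_nonempty)).ne' (measure_ne_top μ _)
  have hIle : m ^ n * V ≤ ∫ p, f p ∂μ := by
    have h1 := integral_mono (integrable_const (m ^ n)) hfint key
    rw [integral_const] at h1
    rw [smul_eq_mul, mul_comm] at h1
    exact h1
  have hvol : volα = ∫ p, f p ∂μ := hvolα
  have hvolpos : 0 < volα := by
    rw [hvol]
    exact lt_of_lt_of_le (by positivity) hIle
  have hsys : sysα ^ n = sys₀ ^ n * m ^ n := by rw [hsysα, hinfT, mul_pow]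
  refine ⟨?_, ?_⟩
  · rw [div_le_div_iff₀ hvolpos hVpos, hsys, hvol, mul_assoc]
    exact mul_le_mul_of_nonneg_left hIle (pow_nonneg hsys₀.le n)
  · have hiff1 : sysα ^ n / volα = sys₀ ^ n / V ↔ m ^ n * V = ∫ p, f p ∂μ := by
      rw [div_eq_div_iff hvolpos.ne' hVpos.ne', hsys, hvol, mul_assoc]
      constructor
      · intro hEq
        exact mul_left_cancel₀ (pow_ne_zero n hsys₀.ne') hEq
      · intro hEq
        rw [hEq]
    rw [hiff1]
    constructor
    · -- equality forces T constant
      intro hEq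
      have hsub_int : Integrable (fun p => f p - m ^ n) μ := hfint.sub (integrable_const _)
      have hzero : ∫ p, (f p - m ^ n) ∂μ = 0 := by
        rw [integral_sub hfint (integrable_const _), integral_const, smul_eq_mul]
        rw [show μ.real Set.univ = V from rfl]
        linarith [hEq]
      have hae : (fun p => f p - m ^ n) =ᵐ[μ] 0 :=
        (integral_eq_zero_iff_of_nonneg (fun p => sub_nonneg.2 (key p)) hsub_int).1 hzero
      have heq : (fun p => f p - m ^ n) = fun _ => (0 : ℝ) :=
        ((hfc.sub continuous_const).ae_eq_iff_eq μ continuous_const).1 hae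
      have hfeq : ∀ p, f p = m ^ n := by
        intro p
        have := congrFun heq p
        linarith
      have hgconst : ∀ p, g p = m := by
        intro p
        rcases eq_or_lt_of_le (hgm p) with h' | h'
        · exact h'.symm
        · exfalso
          have h2 : m ^ n < g p ^ n := pow_lt_pow_left₀ h' hmpos.le hn.ne'
          have h3 := hfeq p
          rw [hfg p] at h3
          linarith
      have hbga : BddAbove (Set.range g) := ⟨m, Set.forall_mem_range.2 fun p => (hgconst p).le⟩
      have hsupg : (⨆ p, g p) = m :=
        le_antisymm (ciSup_le fun p => (hgconst p).le) ((hgconst p0) ▸ le_ciSup hbga p0)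
      have hmax' : (⨆ p, g p) = ⨆ p, T p := hmax
      have hsupT : (⨆ p, T p) = m := by rw [← hmax', hsupg]
      -- max of T
      obtain ⟨r0, -, hr0⟩ :=
        isCompact_univ.exists_isMaxOn Set.univ_nonempty T.continuous.continuousOn
      have hbTa : BddAbove (Set.range T) :=
        ⟨T r0, Set.forall_mem_range.2 fun p => (isMaxOn_iff.1 hr0) p trivial⟩
      refine ⟨m, fun p => le_antisymm ?_ (hp0' p)⟩
      calc T p ≤ ⨆ q, T q := le_ciSup hbTa p
        _ = m := hsupT
    · -- T constant gives equality
      rintro ⟨c, hc⟩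
      have hmc : m = c := hc p0
      obtain ⟨r0, -, hr0⟩ :=
        isCompact_univ.exists_isMaxOn Set.univ_nonempty hgc.continuousOn
      have hbga : BddAbove (Set.range g) :=
        ⟨g r0, Set.forall_mem_range.2 fun p => (isMaxOn_iff.1 hr0) p trivial⟩
      have hsupT : (⨆ p, T p) = c := by
        simp only [hc]
        exact ciSup_const
      have hmax' : (⨆ p, g p) = ⨆ p, T p := hmax
      have hgeq : ∀ p, g p = c := by
        intro p
        refine le_antisymm ?_ (hmc ▸ hgm p)
        calc g p ≤ ⨆ q, g q := le_ciSup hbga p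
          _ = c := by rw [hmax', hsupT]
      have hintf : ∫ p, f p ∂μ = ∫ _p, (c ^ n : ℝ) ∂μ := by
        refine integral_congr_ae (Filter.Eventually.of_forall fun p => ?_)
        rw [hfg p, hgeq p]
      rw [hintf, integral_const, smul_eq_mul, hmc, mul_comm]
      rfl

end
end
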